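/- arXiv:1301.0526 — 4 statements merged into one kernel-verified Lean document; each statement's English description precedes it below -/
import Mathlib

section
/- Let α, β ∈ ℂ with α ∉ ℤ or β ∉ {0, 1}. Then the intermediate series module V_{α,β} with basis {v_n : n ∈ ℤ} and action d_m v_n = (α + n + mβ) v_{m+n}, C v_n = 0, is a simple module over the Virasoro algebra: its only submodules are 0 and V_{α,β}. -/
/-! `d₀` is diagonal with the distinct eigenvalues `α + n`, so a nonzero invariant subspace
contains some `v_n`: applying `d₀ - (α + k)` removes `k` from the support of a vector. From `v_n`
the operators `d_{j-n}` and `d_{k-j}` lead to `v_k` with coefficients `α + n + (j - n)β` and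
`α + j + (k - j)β`. Both are affine in `j`, and the hypothesis on `α, β` says neither vanishes
identically, so each vanishes for at most one `j` and some `j` makes both nonzero. -/

open Finsupp Function

namespace Finsupp

variable {ι K : Type*} [Field K] {f : (ι →₀ K) →ₗ[K] (ι →₀ K)} {c : ι → K}

theorem apply_eq_mul_of_map_single (hf : ∀ i, f (single i 1) = c i • single i 1)
    (w : ι →₀ K) (j : ι) : f w j = c j * w j := by
  suffices (lapply j).comp f = c j • lapply j from LinearMap.congr_fun this w
  refine lhom_ext fun i b => ?_
  rw [LinearMap.comp_apply, ← mul_one b, ← smul_eq_mul, ← smul_single, map_smul, hf]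
  by_cases hij : i = j
  · subst hij; simp [mul_comm]
  · simp [hij]

theorem single_one_mem_of_apply_ne_zero {W : Submodule K (ι →₀ K)} (hW : ∀ w ∈ W, f w ∈ W)
    (hf : ∀ i, f (single i 1) = c i • single i 1) (hc : Injective c) {i : ι} :
    ∀ w ∈ W, w i ≠ 0 → single i 1 ∈ W := by
  classical
  intro w
  induction hN : w.support.card using Nat.strong_induction_on generalizing w with
  | _ N ih =>
    intro hw hi
    by_cases hk : ∃ k ∈ w.support, k ≠ i
    · obtain ⟨k, hk, hki⟩ := hk
      have hw' : f w - c k • w ∈ W := W.sub_mem (hW w hw) (W.smul_mem _ hw)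
      have hval : ∀ j, (f w - c k • w) j = (c j - c k) * w j := fun j => by
        simp only [coe_sub, coe_smul, Pi.sub_apply, Pi.smul_apply, smul_eq_mul,
          apply_eq_mul_of_map_single hf]
        ring
      have hsupp : (f w - c k • w).support ⊂ w.support := by
        refine Finset.ssubset_of_subset_of_ssubset (fun j hj => ?_) (Finset.erase_ssubset hk)
        rw [mem_support_iff, hval] at hj
        refine Finset.mem_erase.mpr ⟨fun hjk => hj (by simp [hjk]), ?_⟩
        exact mem_support_iff.mpr (right_ne_zero_of_mul hj)
      refine ih _ (hN ▸ Finset.card_lt_card hsupp) _ rfl hw' ?_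
      rw [hval]
      exact mul_ne_zero (sub_ne_zero.mpr (hc.ne hki.symm)) hi
    · push Not at hk
      have hw_single : w = single i (w i) :=
        eq_single_iff.mpr ⟨fun k hk' => by simpa using hk k hk', rfl⟩
      rw [hw_single, ← mul_one (w i), ← smul_eq_mul, ← smul_single, W.smul_mem_iff hi] at hw
      exact hw

theorem submodule_eq_top_of_single_one_mem {W : Submodule K (ι →₀ K)}
    (h : ∀ i, single i 1 ∈ W) : W = ⊤ := by
  rw [eq_top_iff, ← Finsupp.basisSingleOne.span_eq, Submodule.span_le]
  rintro _ ⟨i, rfl⟩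
  simpa using h i

end Finsupp

theorem Int.setOf_add_mul_eq_zero_subsingleton {K : Type*} [Field K] [CharZero K] {a b : K}
    (h : a ≠ 0 ∨ b ≠ 0) : {j : ℤ | a + j * b = 0}.Subsingleton := by
  intro j (hj : a + j * b = 0) j' (hj' : a + j' * b = 0)
  have hb : b ≠ 0 := by
    rintro rfl
    simp only [mul_zero, add_zero] at hj
    exact h.resolve_right (not_not_intro rfl) hj
  have : ((j : K) - j') * b = 0 := by linear_combination hj - hj'
  exact_mod_cast sub_eq_zero.mp ((mul_eq_zero.mp this).resolve_right hb)

theorem Int.exists_add_mul_ne_zero_and {K : Type*} [Field K] [CharZero K] {a b a' b' : K}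
    (h : a ≠ 0 ∨ b ≠ 0) (h' : a' ≠ 0 ∨ b' ≠ 0) :
    ∃ j : ℤ, a + j * b ≠ 0 ∧ a' + j * b' ≠ 0 := by
  obtain ⟨j, hj⟩ := ((Int.setOf_add_mul_eq_zero_subsingleton h).finite.union
    (Int.setOf_add_mul_eq_zero_subsingleton h').finite).infinite_compl.nonempty
  simp only [Set.mem_compl_iff, Set.mem_union, Set.mem_ofPred_eq, not_or] at hj
  exact ⟨j, hj⟩

namespace IntermediateSeries

variable {K : Type*} [Field K] {α β : K} {d : ℤ → (ℤ →₀ K) →ₗ[K] (ℤ →₀ K)}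
  {W : Submodule K (ℤ →₀ K)}

theorem exists_single_one_mem [CharZero K]
    (hd : ∀ m n : ℤ, d m (single n 1) = (α + (n : K) + (m : K) * β) • single (m + n) (1 : K))
    (hW : ∀ m : ℤ, ∀ w ∈ W, d m w ∈ W) (hW₀ : W ≠ ⊥) : ∃ n : ℤ, single n 1 ∈ W := by
  obtain ⟨w, hw, hw0⟩ := W.exists_mem_ne_zero_of_ne_bot hW₀
  obtain ⟨n, hn⟩ := Finsupp.ne_iff.mp hw0
  refine ⟨n, single_one_mem_of_apply_ne_zero (f := d 0) (c := fun n => α + n) (hW 0)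
    (fun n => ?_) (fun n n' h => by exact_mod_cast add_left_cancel h) w hw hn⟩
  simpa using hd 0 n

theorem single_one_mem_of_coeff_ne_zero
    (hd : ∀ m n : ℤ, d m (single n 1) = (α + (n : K) + (m : K) * β) • single (m + n) (1 : K))
    (hW : ∀ m : ℤ, ∀ w ∈ W, d m w ∈ W) {n j : ℤ} (hn : single n 1 ∈ W)
    (hnj : α + n + (j - n) * β ≠ 0) : single j 1 ∈ W := by
  have := hW (j - n) _ hn
  rw [hd, sub_add_cancel, Int.cast_sub, W.smul_mem_iff hnj] at this
  exact this

theorem single_one_mem_of_single_one_mem [CharZero K]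
    (hαβ : (∀ m : ℤ, α ≠ (m : K)) ∨ (β ≠ 0 ∧ β ≠ 1))
    (hd : ∀ m n : ℤ, d m (single n 1) = (α + (n : K) + (m : K) * β) • single (m + n) (1 : K))
    (hW : ∀ m : ℤ, ∀ w ∈ W, d m w ∈ W) {n : ℤ} (hn : single n 1 ∈ W) (k : ℤ) :
    single k 1 ∈ W := by
  have hα : ∀ m : ℤ, β ≠ 0 ∧ β ≠ 1 ∨ α + m ≠ 0 := fun m => hαβ.symm.imp_right fun h hm =>
    h (-m) (by push_cast; linear_combination hm)
  obtain ⟨j, hnj, hjk⟩ := Int.exists_add_mul_ne_zero_and (a := α + n - n * β) (b := β)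
    (a' := α + k * β) (b' := 1 - β)
    (by rcases hα n with h | h
        · exact .inr h.1
        · refine or_iff_not_imp_right.mpr fun hβ => ?_
          rw [not_not.mp hβ]
          simpa using h)
    (by rcases hα k with h | h
        · exact .inr (sub_ne_zero.mpr (Ne.symm h.2))
        · refine or_iff_not_imp_right.mpr fun hβ => ?_
          rw [← sub_eq_zero.mp (not_not.mp hβ)]
          simpa using h)
  refine single_one_mem_of_coeff_ne_zero hd hW
    (single_one_mem_of_coeff_ne_zero hd hW hn (j := j) ?_) ?_
  · convert hnj using 1; ring
  · convert hjk using 1; ring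

end IntermediateSeries

/-- If `α ∉ ℤ` or `β ∉ {0, 1}`, the intermediate series module
`V_{α,β}` (modelled on `ℤ →₀ ℂ` with `v_n = single n 1` and action
`d_m v_n = (α + n + mβ) v_{m+n}`, `C` acting by `0`) is a simple Virasoro module:
any subspace invariant under all the operators `d_m` is `0` or everything. -/
theorem stmt_2 (α β : ℂ) (hαβ : (∀ m : ℤ, α ≠ (m : ℂ)) ∨ (β ≠ 0 ∧ β ≠ 1))
    (d : ℤ → (ℤ →₀ ℂ) →ₗ[ℂ] (ℤ →₀ ℂ))
    (hd : ∀ m n : ℤ, d m (Finsupp.single n 1) =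
      (α + (n : ℂ) + (m : ℂ) * β) • Finsupp.single (m + n) (1 : ℂ)) :
    ∀ W : Submodule ℂ (ℤ →₀ ℂ), (∀ m : ℤ, ∀ w ∈ W, d m w ∈ W) → W = ⊥ ∨ W = ⊤ := by
  intro W hW
  refine or_iff_not_imp_left.mpr fun hW₀ => ?_
  obtain ⟨n, hn⟩ := IntermediateSeries.exists_single_one_mem hd hW hW₀
  exact Finsupp.submodule_eq_top_of_single_one_mem
    (IntermediateSeries.single_one_mem_of_single_one_mem hαβ hd hW hn)
end

section
/- Let α, β, c ∈ ℂ, let V be a highest weight module over the Virasoro algebra with highest weight vector u of highest weight (c, h), and write homogeneous elements P of U(Vir_−) with d_0-degree deg(P) ∈ ℤ_{≤0}. Then the formulas d_k · (Pu ⊗ t^n) = ((d_k + α + n − deg(P) + kβ) P u) ⊗ t^{n+k} (for k, n ∈ ℤ and P ∈ U(Vir_−) homogeneous) and C acting by the scalar c define a Virasoro module structure on L = V ⊗ ℂ[t, t^{−1}], and the linear map V ⊗ V_{α,β} → L sending Pu ⊗ v_n to Pu ⊗ t^{n + deg(P)} is an isomorphism of Virasoro modules. -/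
/-!
Write `L = V ⊗ K[t, t⁻¹]` as `ℤ →₀ V`. For `x` of degree `m` put `a_k = α + n - m + kβ`; two
applications of the formula for `D` give
`D_j D_k (x tⁿ) = (d_j d_k x + a_j d_k x + a_k d_j x + a_k (a_j + k) x) t^{n+j+k}`,
so in the commutator the mixed terms cancel and `k a_k - j a_j = (k - j) a_{j+k}`: the Virasoro
relations of `d` pass to `D`. After the identification `V ⊗ (ℤ →₀ K) ≃ ℤ →₀ V`, the map `Φ` is the
degree shift `x tⁿ ↦ x t^{n+m}`, whose inverse is the shift by `-m`, and it intertwines the two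
actions by a direct check on the spanning vectors `x ⊗ v_n`.
-/

open TensorProduct Finsupp

section Grading

variable {R V M : Type*} [CommRing R] [AddCommGroup V] [Module R V] [AddCommGroup M] [Module R M]

namespace DirectSum.IsInternal

section Ext

variable {ι κ : Type*} [DecidableEq ι] {W : ι → Submodule R V}

theorem linearMap_ext (hW : IsInternal W) {f g : V →ₗ[R] M}
    (h : ∀ m, ∀ x ∈ W m, f x = g x) : f = g :=
  LinearMap.ext_on (s := ⋃ m, (W m : Set V))
    (by rw [← Submodule.iSup_eq_span, hW.submodule_iSup_eq_top])
    fun x hx => by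
      obtain ⟨m, hm⟩ := Set.mem_iUnion.mp hx
      exact h m x hm

theorem finsupp_linearMap_ext (hW : IsInternal W) {f g : (κ →₀ V) →ₗ[R] M}
    (h : ∀ m n, ∀ x ∈ W m, f (single n x) = g (single n x)) : f = g :=
  lhom_ext' fun n => hW.linearMap_ext fun m x hx => h m n x hx

theorem tensor_finsupp_linearMap_ext [DecidableEq κ] (hW : IsInternal W)
    {f g : V ⊗[R] (κ →₀ R) →ₗ[R] M}
    (h : ∀ m n, ∀ x ∈ W m, f (x ⊗ₜ single n 1) = g (x ⊗ₜ single n 1)) : f = g := by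
  let e := finsuppScalarRight R R V κ
  have : f ∘ₗ e.symm.toLinearMap = g ∘ₗ e.symm.toLinearMap :=
    hW.finsupp_linearMap_ext fun m n x hx => by simpa [e] using h m n x hx
  exact LinearMap.ext fun t => by simpa using congr($this (e t))

end Ext

variable {W : ℤ → Submodule R V}

noncomputable def gradedShift (hW : IsInternal W) (s : ℤ) : (ℤ →₀ V) →ₗ[R] (ℤ →₀ V) :=
  lsum R fun n => toModule R ℤ _ (fun m => (lsingle (n + s * m)).comp (W m).subtype) ∘ₗ
    (LinearEquiv.ofBijective (coeLinearMap W) hW).symm.toLinearMap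

theorem gradedShift_single (hW : IsInternal W) (s : ℤ) {m n : ℤ} {x : V} (hx : x ∈ W m) :
    hW.gradedShift s (single n x) = single (n + s * m) x := by
  have : (LinearEquiv.ofBijective (coeLinearMap W) hW).symm x = lof R ℤ (W ·) m ⟨x, hx⟩ := by
    rw [LinearEquiv.symm_apply_eq]
    exact (coeLinearMap_of W m ⟨x, hx⟩).symm
  simp [gradedShift, this]

theorem gradedShift_comp (hW : IsInternal W) (s t : ℤ) :
    hW.gradedShift s ∘ₗ hW.gradedShift t = hW.gradedShift (s + t) :=
  hW.finsupp_linearMap_ext fun m n x hx => by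
    simp only [LinearMap.comp_apply, gradedShift_single hW _ hx]
    congr 1
    ring

theorem gradedShift_zero (hW : IsInternal W) : hW.gradedShift 0 = LinearMap.id :=
  hW.finsupp_linearMap_ext fun m n x hx => by simp [gradedShift_single hW _ hx]

noncomputable def gradedShiftEquiv (hW : IsInternal W) : (ℤ →₀ V) ≃ₗ[R] (ℤ →₀ V) :=
  .ofLinearMap (hW.gradedShift 1) (hW.gradedShift (-1))
    (by rw [gradedShift_comp, add_neg_cancel, gradedShift_zero])
    (by rw [gradedShift_comp, neg_add_cancel, gradedShift_zero])

theorem bijective_of_tmul_single (hW : IsInternal W) {Φ : V ⊗[R] (ℤ →₀ R) →ₗ[R] (ℤ →₀ V)}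
    (hΦ : ∀ m n, ∀ x ∈ W m, Φ (x ⊗ₜ single n 1) = single (n + m) x) : Function.Bijective Φ := by
  have : Φ = (finsuppScalarRight R R V ℤ ≪≫ₗ hW.gradedShiftEquiv).toLinearMap :=
    hW.tensor_finsupp_linearMap_ext fun m n x hx => by
      simp [hΦ m n x hx, gradedShiftEquiv, finsuppScalarRight_apply_tmul,
        gradedShift_single hW _ hx]
  rw [this]
  exact LinearEquiv.bijective _

end DirectSum.IsInternal

end Grading

section Virasoro

variable {K V : Type*} [Field K] [AddCommGroup V] [Module K V]

def IsVirasoroAction {M : Type*} [AddCommGroup M] [Module K M] (c : K) (d : ℤ → M →ₗ[K] M) :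
    Prop :=
  ∀ j k : ℤ, ∀ x : M, d j (d k x) - d k (d j x)
    = ((k : K) - (j : K)) • d (j + k) x
      + (if k = -j then ((j : K) ^ 3 - (j : K)) / 12 * c else 0) • x

variable {W : ℤ → Submodule K V} {d : ℤ → V →ₗ[K] V} {α β : K}
  {D : ℤ → (ℤ →₀ V) →ₗ[K] (ℤ →₀ V)}

theorem loop_apply_apply_single (hWd : ∀ k m : ℤ, ∀ x ∈ W m, d k x ∈ W (m + k))
    (hD : ∀ k m n : ℤ, ∀ x ∈ W m, D k (single n x)
      = single (n + k) (d k x + (α + (n : K) - (m : K) + (k : K) * β) • x))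
    (j k : ℤ) {m n : ℤ} {x : V} (hx : x ∈ W m) :
    D j (D k (single n x)) = single (n + (j + k)) (d j (d k x)
      + (α + n - m + j * β) • d k x + (α + n - m + k * β) • d j x
      + ((α + n - m + k * β) * (α + n - m + j * β + k)) • x) := by
  rw [hD k m n x hx, single_add, ← smul_single, map_add, map_smul,
    hD j (m + k) (n + k) _ (hWd k m x hx), hD j m (n + k) x hx, smul_single,
    ← single_add, show n + k + j = n + (j + k) by ring]
  congr 1
  match_scalars <;> ring

theorem isVirasoroAction_loop (c : K) (hd : IsVirasoroAction c d) (hW : DirectSum.IsInternal W)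
    (hWd : ∀ k m : ℤ, ∀ x ∈ W m, d k x ∈ W (m + k))
    (hD : ∀ k m n : ℤ, ∀ x ∈ W m, D k (single n x)
      = single (n + k) (d k x + (α + (n : K) - (m : K) + (k : K) * β) • x)) :
    IsVirasoroAction c D := by
  intro j k
  set z : K := if k = -j then ((j : K) ^ 3 - (j : K)) / 12 * c else 0
  have hz : ∀ n : ℤ, ∀ x : V, z • single n x = single (n + (j + k)) (z • x) := by
    intro n x
    by_cases hkj : k = -j
    · simp [hkj]
    · simp [z, hkj]
  suffices D j ∘ₗ D k - D k ∘ₗ D j = ((k : K) - j) • D (j + k) + z • LinearMap.id from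
    fun y => by simpa using congr($this y)
  refine hW.finsupp_linearMap_ext fun m n x hx => ?_
  simp only [LinearMap.sub_apply, LinearMap.add_apply, LinearMap.smul_apply, LinearMap.comp_apply,
    LinearMap.id_apply, hz, hD (j + k) m n x hx, smul_single, ← single_sub, ← single_add,
    loop_apply_apply_single hWd hD _ _ hx, add_comm k j]
  have hbracket : d j (d k x) = ((k : K) - j) • d (j + k) x + z • x + d k (d j x) :=
    sub_eq_iff_eq_add.mp (hd j k x)
  rw [hbracket]
  congr 1
  push_cast
  match_scalars <;> ring

theorem loop_intertwines (hW : DirectSum.IsInternal W)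
    (hWd : ∀ k m : ℤ, ∀ x ∈ W m, d k x ∈ W (m + k))
    {dab : ℤ → (ℤ →₀ K) →ₗ[K] (ℤ →₀ K)}
    (hdab : ∀ m n : ℤ, dab m (single n 1) = (α + (n : K) + (m : K) * β) • single (m + n) (1 : K))
    (hD : ∀ k m n : ℤ, ∀ x ∈ W m, D k (single n x)
      = single (n + k) (d k x + (α + (n : K) - (m : K) + (k : K) * β) • x))
    {Φ : V ⊗[K] (ℤ →₀ K) →ₗ[K] (ℤ →₀ V)}
    (hΦ : ∀ m n : ℤ, ∀ x ∈ W m, Φ (x ⊗ₜ single n 1) = single (n + m) x) (k : ℤ) :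
    Φ ∘ₗ (map (d k) LinearMap.id + map LinearMap.id (dab k)) = D k ∘ₗ Φ :=
  hW.tensor_finsupp_linearMap_ext fun m n x hx => by
    rw [LinearMap.comp_apply, LinearMap.add_apply, map_tmul, map_tmul, LinearMap.id_apply,
      LinearMap.id_apply, hdab, tmul_smul, map_add, map_smul, hΦ _ _ _ (hWd k m x hx),
      hΦ m _ x hx, LinearMap.comp_apply, hΦ m n x hx, hD k m (n + m) x hx, smul_single,
      show n + (m + k) = n + m + k by ring, show k + n + m = n + m + k by ring, ← single_add]
    congr 1
    match_scalars <;> ring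

end Virasoro

theorem stmt_4_general (α β c : ℂ) (V : Type*) [AddCommGroup V] [Module ℂ V]
    (d : ℤ → V →ₗ[ℂ] V)
    -- Virasoro bracket on V, with the central element acting by the scalar c :
    (hbr : ∀ j k : ℤ, ∀ x : V, d j (d k x) - d k (d j x)
      = ((k : ℂ) - (j : ℂ)) • d (j + k) x
        + (if k = -j then ((j : ℂ) ^ 3 - (j : ℂ)) / 12 * c else 0) • x)
    -- the weight grading of the highest weight module V :
    (W : ℤ → Submodule ℂ V) (hW : DirectSum.IsInternal W)
    (hWd : ∀ k m : ℤ, ∀ x ∈ W m, d k x ∈ W (m + k))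
    -- the intermediate series action on V_{α,β} = ℤ →₀ ℂ :
    (dab : ℤ → (ℤ →₀ ℂ) →ₗ[ℂ] (ℤ →₀ ℂ))
    (hdab : ∀ m n : ℤ, dab m (Finsupp.single n 1) =
      (α + (n : ℂ) + (m : ℂ) * β) • Finsupp.single (m + n) (1 : ℂ))
    -- the operators D on L = V ⊗ ℂ[t,t⁻¹] given by the formula of the statement :
    (D : ℤ → (ℤ →₀ V) →ₗ[ℂ] (ℤ →₀ V))
    (hD : ∀ k m n : ℤ, ∀ x ∈ W m, D k (Finsupp.single n x)
      = Finsupp.single (n + k) (d k x + (α + (n : ℂ) - (m : ℂ) + (k : ℂ) * β) • x))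
    -- the linear map Φ : V ⊗ V_{α,β} → L, Pu ⊗ v_n ↦ Pu ⊗ t^{n + deg P} :
    (Φ : TensorProduct ℂ V (ℤ →₀ ℂ) →ₗ[ℂ] (ℤ →₀ V))
    (hΦ : ∀ m n : ℤ, ∀ x ∈ W m,
      Φ (x ⊗ₜ[ℂ] Finsupp.single n 1) = Finsupp.single (n + m) x) :
    -- (1) D is a Virasoro module structure on L with central charge c :
    (∀ j k : ℤ, ∀ y : ℤ →₀ V, D j (D k y) - D k (D j y)
      = ((k : ℂ) - (j : ℂ)) • D (j + k) y
        + (if k = -j then ((j : ℂ) ^ 3 - (j : ℂ)) / 12 * c else 0) • y)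
    -- (2) Φ is an isomorphism of Virasoro modules :
    ∧ Function.Bijective Φ
    ∧ (∀ k : ℤ, ∀ y : TensorProduct ℂ V (ℤ →₀ ℂ),
        Φ ((TensorProduct.map (d k) (LinearMap.id : (ℤ →₀ ℂ) →ₗ[ℂ] (ℤ →₀ ℂ))
            + TensorProduct.map (LinearMap.id : V →ₗ[ℂ] V) (dab k)) y) = D k (Φ y)) :=
  ⟨isVirasoroAction_loop c hbr hW hWd hD, hW.bijective_of_tmul_single hΦ,
    fun k => LinearMap.congr_fun (loop_intertwines hW hWd hdab hD hΦ k)⟩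

/-- Let `V` be a highest weight module over the Virasoro algebra with
highest weight vector `u` of highest weight `(c, h)`, with Virasoro action `d` and
weight-grading `W` (so `W m` is the space of homogeneous vectors of degree `m ≤ 0`,
i.e. vectors `Pu` with `P ∈ U(Vir₋)` homogeneous of degree `m`).  Model
`L = V ⊗ ℂ[t, t⁻¹]` as `ℤ →₀ V` (with `x ⊗ tⁿ = single n x`).  Then:
(1) the formulas `d_k (Pu ⊗ tⁿ) = ((d_k + α + n − deg P + kβ) Pu) ⊗ t^{n+k}` and `C`
acting by the scalar `c` define a Virasoro module structure on `L` (the operators `D`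
satisfy the Virasoro bracket with central charge `c`); and
(2) the linear map `Φ : V ⊗ V_{α,β} → L`, `Pu ⊗ v_n ↦ Pu ⊗ t^{n + deg P}`, is an
isomorphism of Virasoro modules, where `V_{α,β}` is `ℤ →₀ ℂ` with basis
`v_n = single n 1`, action `dab`, and the Virasoro action on the tensor product is
`d_k ⊗ 1 + 1 ⊗ dab k`. -/
theorem stmt_4 (α β c h : ℂ) (V : Type*) [AddCommGroup V] [Module ℂ V]
    (d : ℤ → V →ₗ[ℂ] V) (u : V)
    -- Virasoro bracket on V, with the central element acting by the scalar c :
    (hbr : ∀ j k : ℤ, ∀ x : V, d j (d k x) - d k (d j x)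
      = ((k : ℂ) - (j : ℂ)) • d (j + k) x
        + (if k = -j then ((j : ℂ) ^ 3 - (j : ℂ)) / 12 * c else 0) • x)
    -- the weight grading of the highest weight module V :
    (W : ℤ → Submodule ℂ V) (hW : DirectSum.IsInternal W)
    (hWpos : ∀ m : ℤ, 0 < m → W m = ⊥)
    (hWd : ∀ k m : ℤ, ∀ x ∈ W m, d k x ∈ W (m + k))
    (hW0 : ∀ m : ℤ, ∀ x ∈ W m, d 0 x = (h + (m : ℂ)) • x)
    -- u is a highest weight vector of weight (c,h) generating V :
    (hu : u ∈ W 0) (hhw : ∀ k : ℤ, 0 < k → d k u = 0)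
    (hgen : ∀ W' : Submodule ℂ V, u ∈ W' → (∀ k : ℤ, ∀ x ∈ W', d k x ∈ W') → W' = ⊤)
    -- the intermediate series action on V_{α,β} = ℤ →₀ ℂ :
    (dab : ℤ → (ℤ →₀ ℂ) →ₗ[ℂ] (ℤ →₀ ℂ))
    (hdab : ∀ m n : ℤ, dab m (Finsupp.single n 1) =
      (α + (n : ℂ) + (m : ℂ) * β) • Finsupp.single (m + n) (1 : ℂ))
    -- the operators D on L = V ⊗ ℂ[t,t⁻¹] given by the formula of the statement :
    (D : ℤ → (ℤ →₀ V) →ₗ[ℂ] (ℤ →₀ V))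
    (hD : ∀ k m n : ℤ, ∀ x ∈ W m, D k (Finsupp.single n x)
      = Finsupp.single (n + k) (d k x + (α + (n : ℂ) - (m : ℂ) + (k : ℂ) * β) • x))
    -- the linear map Φ : V ⊗ V_{α,β} → L, Pu ⊗ v_n ↦ Pu ⊗ t^{n + deg P} :
    (Φ : TensorProduct ℂ V (ℤ →₀ ℂ) →ₗ[ℂ] (ℤ →₀ V))
    (hΦ : ∀ m n : ℤ, ∀ x ∈ W m,
      Φ (x ⊗ₜ[ℂ] Finsupp.single n 1) = Finsupp.single (n + m) x) :
    -- (1) D is a Virasoro module structure on L with central charge c :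
    (∀ j k : ℤ, ∀ y : ℤ →₀ V, D j (D k y) - D k (D j y)
      = ((k : ℂ) - (j : ℂ)) • D (j + k) y
        + (if k = -j then ((j : ℂ) ^ 3 - (j : ℂ)) / 12 * c else 0) • y)
    -- (2) Φ is an isomorphism of Virasoro modules :
    ∧ Function.Bijective Φ
    ∧ (∀ k : ℤ, ∀ y : TensorProduct ℂ V (ℤ →₀ ℂ),
        Φ ((TensorProduct.map (d k) (LinearMap.id : (ℤ →₀ ℂ) →ₗ[ℂ] (ℤ →₀ ℂ))
            + TensorProduct.map (LinearMap.id : V →ₗ[ℂ] V) (dab k)) y) = D k (Φ y)) :=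
  stmt_4_general α β c V d hbr W hW hWd dab hdab D hD Φ hΦ
end

section
/- Fix α, β ∈ ℂ and n ∈ ℤ. Let T(Vir_−) be the free associative ℂ-algebra (tensor algebra) on generators {d_{−k} : k ≥ 1}, graded by deg(d_{−k}) = −k. Define a linear map φ_n : T(Vir_−) → ℂ inductively by φ_n(1) = 1 and φ_n(d_{−k} P) = −(α + n + k − deg(P) − kβ) φ_n(P) for homogeneous P. Then for all i, j ≥ 1 and every homogeneous P ∈ T(Vir_−), φ_n((d_{−i} d_{−j} − d_{−j} d_{−i} − (i − j) d_{−i−j}) P) = 0. Consequently φ_n factors through the universal enveloping algebra U(Vir_−) = T(Vir_−)/J, where J is the two-sided ideal generated by the elements d_{−i} d_{−j} − d_{−j} d_{−i} − (i − j) d_{−i−j}. -/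
/-! STATEMENT 5: the linear map `φ_n` on the tensor algebra `T(Vir₋)` (the free
associative algebra on generators `d_{-k}`, `k ≥ 1`, modelled as the monoid algebra
of the free monoid on `ℕ+`, whose basis consists of the words in the `d_{-k}`),
defined by `φ_n(1) = 1`, `φ_n(d_{-k} P) = -(α + n + k - deg P - kβ) φ_n(P)`,
kills `(d_{-i} d_{-j} - d_{-j} d_{-i} - (i-j) d_{-i-j}) P` for all words `P`, and
consequently vanishes on the two-sided ideal `J` generated by these relators, hence
factors through `U(Vir₋) = T(Vir₋)/J`. -/

/-- the degree `deg` on words: `deg(d_{-k}) = -k`; `sumL P = -deg P`. -/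
def sumL (P : List ℕ+) : ℕ := (P.map fun j => (j : ℕ)).sum

/-- `φ_n` on the basis of words: `φ_n(1) = 1` and
`φ_n(d_{-k} P) = -(α + n + k - deg P - kβ) φ_n(P)`. -/
noncomputable def phiW (α β : ℂ) (n : ℤ) : List ℕ+ → ℂ
  | [] => 1
  | k :: P => -(α + (n : ℂ) + ((k : ℕ) : ℂ) + ((sumL P : ℕ) : ℂ) - ((k : ℕ) : ℂ) * β)
      * phiW α β n P

/-- `φ_n` as a linear map on the tensor algebra `T(Vir₋)`, i.e. the linear extension
of `phiW` to the monoid algebra of the free monoid on `ℕ+`. -/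
noncomputable def phiT (α β : ℂ) (n : ℤ) :
    MonoidAlgebra ℂ (FreeMonoid ℕ+) →ₗ[ℂ] ℂ :=
  Finsupp.linearCombination ℂ (fun w : FreeMonoid ℕ+ => phiW α β n (FreeMonoid.toList w))
    ∘ₗ (MonoidAlgebra.coeffLinearEquiv ℂ :
      MonoidAlgebra ℂ (FreeMonoid ℕ+) ≃ₗ[ℂ] (FreeMonoid ℕ+ →₀ ℂ)).toLinearMap

/-- the relator `d_{-i} d_{-j} - d_{-j} d_{-i} - (i - j) d_{-i-j}` in `T(Vir₋)`. -/
noncomputable def relator (i j : ℕ+) : MonoidAlgebra ℂ (FreeMonoid ℕ+) :=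
  MonoidAlgebra.single (FreeMonoid.of i * FreeMonoid.of j) 1
    - MonoidAlgebra.single (FreeMonoid.of j * FreeMonoid.of i) 1
    - (((i : ℕ) : ℂ) - ((j : ℕ) : ℂ)) • MonoidAlgebra.single (FreeMonoid.of (i + j)) 1

/-- The largest two-sided ideal contained in the kernel of an additive map `f`. -/
def TwoSidedIdeal.kerCore {R M F : Type*} [Ring R] [AddCommGroup M] [FunLike F R M]
    [AddMonoidHomClass F R M] (f : F) : TwoSidedIdeal R :=
  TwoSidedIdeal.mk' {x | ∀ a b, f (a * x * b) = 0}
    (by simp)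
    (fun hx hy a b => by rw [mul_add, add_mul, map_add, hx, hy, add_zero])
    (fun hx a b => by rw [mul_neg, neg_mul, map_neg, hx, neg_zero])
    (fun {x y} hy a b => by simpa only [mul_assoc] using hy (a * x) b)
    (fun {x y} hx a b => by simpa only [mul_assoc] using hx a (y * b))

theorem TwoSidedIdeal.mem_kerCore {R M F : Type*} [Ring R] [AddCommGroup M] [FunLike F R M]
    [AddMonoidHomClass F R M] (f : F) (x : R) :
    x ∈ TwoSidedIdeal.kerCore f ↔ ∀ a b, f (a * x * b) = 0 :=
  TwoSidedIdeal.mem_mk' _ _ _ _ _ _ x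

theorem map_eq_zero_of_mem_twoSidedIdeal_span {R M F : Type*} [Ring R] [AddCommGroup M]
    [FunLike F R M] [AddMonoidHomClass F R M] (f : F) {s : Set R}
    (hs : ∀ r ∈ s, ∀ a b, f (a * r * b) = 0) {x : R} (hx : x ∈ TwoSidedIdeal.span s) :
    f x = 0 := by
  have hle : TwoSidedIdeal.span s ≤ TwoSidedIdeal.kerCore f :=
    TwoSidedIdeal.span_le.mpr fun r hr => (TwoSidedIdeal.mem_kerCore f r).mpr (hs r hr)
  simpa using (TwoSidedIdeal.mem_kerCore f x).mp (hle hx) 1 1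

theorem MonoidAlgebra.map_mul_mul_eq_zero_of_single {k G M : Type*} [CommSemiring k] [Monoid G]
    [AddCommMonoid M] [Module k M] (f : MonoidAlgebra k G →ₗ[k] M) (s : MonoidAlgebra k G)
    (hs : ∀ a b : G, f (single a 1 * s * single b 1) = 0) (x y : MonoidAlgebra k G) :
    f (x * s * y) = 0 := by
  have single_eq_smul (g : G) (c : k) : (single g c : MonoidAlgebra k G) = c • single g 1 := by
    rw [smul_single', mul_one]
  induction x using induction_linear with
  | zero => simp
  | add x x' hx hx' => rw [add_mul, add_mul, map_add, hx, hx', add_zero]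
  | single a c =>
    induction y using induction_linear with
    | zero => simp
    | add y y' hy hy' => rw [mul_add, map_add, hy, hy', add_zero]
    | single b d =>
      rw [single_eq_smul a, single_eq_smul b, smul_mul_assoc, smul_mul_assoc, mul_smul_comm,
        map_smul, map_smul, hs, smul_zero, smul_zero]

@[simp]
lemma sumL_cons (k : ℕ+) (P : List ℕ+) : sumL (k :: P) = k + sumL P := by
  simp [sumL]

@[simp]
lemma sumL_append (w v : List ℕ+) : sumL (w ++ v) = sumL w + sumL v := by
  simp [sumL]

/- Each letter of `w` contributes a factor depending only on the degree of the suffix after it,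
and the three words share that degree; so only the case `w = []` is a computation. -/
lemma phiW_append_cons_cons_sub (α β : ℂ) (n : ℤ) (w : List ℕ+) (i j : ℕ+) (P : List ℕ+) :
    phiW α β n (w ++ i :: j :: P) - phiW α β n (w ++ j :: i :: P)
      = (((i : ℕ) : ℂ) - ((j : ℕ) : ℂ)) * phiW α β n (w ++ (i + j) :: P) := by
  induction w with
  | nil =>
    simp only [List.nil_append, phiW, sumL_cons, PNat.add_coe]
    push_cast
    ring
  | cons k w ih =>
    have hji : sumL (w ++ j :: i :: P) = sumL (w ++ i :: j :: P) := by simp; ring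
    have hij : sumL (w ++ (i + j) :: P) = sumL (w ++ i :: j :: P) := by simp; ring
    simp only [List.cons_append, phiW, hji, hij]
    linear_combination
      (-(α + (n : ℂ) + ((k : ℕ) : ℂ) + ((sumL (w ++ i :: j :: P) : ℕ) : ℂ)
        - ((k : ℕ) : ℂ) * β)) * ih

lemma phiT_single (α β : ℂ) (n : ℤ) (w : FreeMonoid ℕ+) (c : ℂ) :
    phiT α β n (MonoidAlgebra.single w c) = c * phiW α β n (FreeMonoid.toList w) := by
  simp [phiT]

lemma phiT_single_mul_relator_mul_single (α β : ℂ) (n : ℤ) (a b : FreeMonoid ℕ+) (i j : ℕ+) :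
    phiT α β n (MonoidAlgebra.single a 1 * relator i j * MonoidAlgebra.single b 1) = 0 := by
  simp only [relator, mul_sub, sub_mul, smul_mul_assoc, mul_smul_comm,
    MonoidAlgebra.single_mul_single, one_mul, mul_one, map_sub, map_smul, phiT_single,
    FreeMonoid.toList_mul, FreeMonoid.toList_of, smul_eq_mul, List.append_assoc,
    List.cons_append, List.nil_append, phiW_append_cons_cons_sub]
  ring

theorem stmt_5 (α β : ℂ) (n : ℤ) :
    -- `φ_n((d_{-i}d_{-j} - d_{-j}d_{-i} - (i-j)d_{-i-j}) P) = 0` for every word `P` :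
    (∀ i j : ℕ+, ∀ P : FreeMonoid ℕ+,
      phiT α β n (relator i j * MonoidAlgebra.single P 1) = 0)
    -- consequently `φ_n` vanishes on the two-sided ideal `J` generated by the
    -- relators, hence factors through `U(Vir₋) = T(Vir₋)/J` :
    ∧ (∀ x ∈ TwoSidedIdeal.span {r : MonoidAlgebra ℂ (FreeMonoid ℕ+) |
        ∃ i j : ℕ+, r = relator i j}, phiT α β n x = 0) := by
  have hJ (i j : ℕ+) (a b : MonoidAlgebra ℂ (FreeMonoid ℕ+)) :
      phiT α β n (a * relator i j * b) = 0 :=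
    MonoidAlgebra.map_mul_mul_eq_zero_of_single _ _
      (phiT_single_mul_relator_mul_single α β n · · i j) a b
  refine ⟨fun i j P => by simpa using hJ i j 1 (MonoidAlgebra.single P 1), fun x hx => ?_⟩
  refine map_eq_zero_of_mem_twoSidedIdeal_span (phiT α β n) ?_ hx
  rintro _ ⟨i, j, rfl⟩
  exact hJ i j
end

section
/- Let α, β ∈ ℂ with 0 ≤ Re(α) < 1. Set n₁ = β − α − 1 + √(1 − β) and n₂ = β − α − 1 − √(1 − β) for some choice of square root. Then both n₁ and n₂ are integers if and only if either (α = 0 and β = 1 − k² for some k ∈ ℕ, k ≥ 1, in which case {n₁, n₂} = {−k² + k, −k² − k}), or (α = 1/4 and β = 1 − (l + 1/2)² for some l ∈ ℤ_{≥0}, in which case {n₁, n₂} = {−l², −(l+1)²}). -/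
/-!
Writing `n₁, n₂` for the two numbers, `n₁ - n₂ = 2s` and `s² = 1 - β` give
`4β = 4 - (n₁ - n₂)²` and `4α = -(n₁ - n₂)² - 2(n₁ + n₂)`, so `α` and `β` are determined by the
unordered pair `{n₁, n₂}`. If `n₁, n₂ ∈ ℤ`, then `4α` is an integer in `[0, 4)`; modulo `4` it is
`0` when `n₁ - n₂` is even and `1` when it is odd, which forces `α = 0` or `α = 1/4` and pins down
the pair.
-/

lemma four_mul_eq_of_pair_eq {α β s p q : ℂ} (hs : s ^ 2 = 1 - β)
    (h : ({β - α - 1 + s, β - α - 1 - s} : Set ℂ) = {p, q}) :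
    4 * β = 4 - (p - q) ^ 2 ∧ 4 * α = -(p - q) ^ 2 - 2 * (p + q) := by
  rcases Set.pair_eq_pair_iff.mp h with ⟨rfl, rfl⟩ | ⟨rfl, rfl⟩ <;>
    exact ⟨by linear_combination 4 * hs, by linear_combination 4 * hs⟩

lemma exists_intCast_of_pair_eq {x y : ℂ} {a b : ℤ}
    (h : ({x, y} : Set ℂ) = {(a : ℂ), (b : ℂ)}) : (∃ m : ℤ, x = m) ∧ ∃ m : ℤ, y = m := by
  rcases Set.pair_eq_pair_iff.mp h with ⟨rfl, rfl⟩ | ⟨rfl, rfl⟩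
  exacts [⟨⟨a, rfl⟩, ⟨b, rfl⟩⟩, ⟨⟨b, rfl⟩, ⟨a, rfl⟩⟩]

lemma nonneg_and_lt_four_of_four_mul_eq_intCast {α : ℂ} {z : ℤ} (hre : 0 ≤ α.re ∧ α.re < 1)
    (h : 4 * α = z) : 0 ≤ z ∧ z < 4 := by
  have hz : (4 : ℝ) * α.re = z := by simpa using congrArg Complex.re h
  exact ⟨by exact_mod_cast (by linarith : (0 : ℝ) ≤ z),
    by exact_mod_cast (by linarith : (z : ℝ) < 4)⟩

lemma Int.pair_eq_of_sub_sq_bounds {a b : ℤ} (h0 : 0 ≤ -(a - b) ^ 2 - 2 * (a + b))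
    (h4 : -(a - b) ^ 2 - 2 * (a + b) < 4) :
    (∃ k : ℕ, ({a, b} : Set ℤ) = {-(k : ℤ) ^ 2 + k, -(k : ℤ) ^ 2 - k}) ∨
      ∃ l : ℕ, ({a, b} : Set ℤ) = {-(l : ℤ) ^ 2, -((l : ℤ) + 1) ^ 2} := by
  wlog hba : b ≤ a generalizing a b
  · rw [Set.pair_comm a b]
    exact this (by linear_combination h0) (by linear_combination h4) (by omega)
  obtain ⟨t, ht⟩ : ∃ t : ℕ, a = b + t := ⟨(a - b).toNat, by omega⟩
  subst ht
  rcases Nat.even_or_odd' t with ⟨k, rfl | rfl⟩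
  · have hb : b = -(k : ℤ) ^ 2 - k := by
      have h0' : 0 ≤ -4 * (k : ℤ) ^ 2 - 4 * k - 4 * b := by
        push_cast at h0; linear_combination h0
      have h4' : -4 * (k : ℤ) ^ 2 - 4 * k - 4 * b < 4 := by
        push_cast at h4; linear_combination h4
      generalize (k : ℤ) ^ 2 = q at h0' h4' ⊢
      omega
    exact .inl ⟨k, by rw [hb]; push_cast; ring_nf⟩
  · have hb : b = -(k : ℤ) ^ 2 - 2 * k - 1 := by
      have h0' : 0 ≤ -4 * (k : ℤ) ^ 2 - 8 * k - 3 - 4 * b := by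
        push_cast at h0; linear_combination h0
      have h4' : -4 * (k : ℤ) ^ 2 - 8 * k - 3 - 4 * b < 4 := by
        push_cast at h4; linear_combination h4
      generalize (k : ℤ) ^ 2 = q at h0' h4' ⊢
      omega
    exact .inr ⟨k, by rw [hb]; push_cast; ring_nf⟩

/-- for `0 ≤ Re α < 1` (and `β ≠ 1`, the standing assumption of the
paper), with `s` a complex square root of `1 - β` and `n₁ = β - α - 1 + s`,
`n₂ = β - α - 1 - s`, both `n₁` and `n₂` are integers iff either `α = 0` and
`β = 1 - k²` for some `k ∈ ℕ`, `k ≥ 1`, with `{n₁, n₂} = {-k² + k, -k² - k}`, or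
`α = 1/4` and `β = 1 - (l + 1/2)²` for some `l ∈ ℤ≥0`, with
`{n₁, n₂} = {-l², -(l+1)²}`. -/
theorem stmt_11 (α β : ℂ) (hre : 0 ≤ α.re ∧ α.re < 1) (hβ : β ≠ 1)
    (s : ℂ) (hs : s ^ 2 = 1 - β) :
    ((∃ m : ℤ, β - α - 1 + s = (m : ℂ)) ∧ (∃ m : ℤ, β - α - 1 - s = (m : ℂ)))
    ↔ ((α = 0 ∧ ∃ k : ℕ, 1 ≤ k ∧ β = 1 - (k : ℂ) ^ 2 ∧
          ({β - α - 1 + s, β - α - 1 - s} : Set ℂ)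
            = {-(k : ℂ) ^ 2 + (k : ℂ), -(k : ℂ) ^ 2 - (k : ℂ)})
      ∨ (α = 1 / 4 ∧ ∃ l : ℕ, β = 1 - ((l : ℂ) + 1 / 2) ^ 2 ∧
          ({β - α - 1 + s, β - α - 1 - s} : Set ℂ)
            = {-(l : ℂ) ^ 2, -((l : ℂ) + 1) ^ 2})) := by
  constructor
  · rintro ⟨⟨a, ha⟩, ⟨b, hb⟩⟩
    have hab : ({β - α - 1 + s, β - α - 1 - s} : Set ℂ) = Int.cast '' {a, b} := by
      rw [Set.image_pair, ha, hb]
    have hz : 4 * α = ((-(a - b) ^ 2 - 2 * (a + b) : ℤ) : ℂ) := by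
      push_cast
      exact (four_mul_eq_of_pair_eq hs (hab.trans (Set.image_pair _ _ _))).2
    obtain ⟨h0, h4⟩ := nonneg_and_lt_four_of_four_mul_eq_intCast hre hz
    rcases Int.pair_eq_of_sub_sq_bounds h0 h4 with ⟨k, hk⟩ | ⟨l, hl⟩
    · rw [hk, Set.image_pair] at hab
      push_cast at hab
      obtain ⟨hβ4, hα4⟩ := four_mul_eq_of_pair_eq hs hab
      refine .inl ⟨by linear_combination hα4 / 4, k, ?_, by linear_combination hβ4 / 4, hab⟩
      by_contra! hk
      obtain rfl : k = 0 := by omega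
      exact hβ (by linear_combination hβ4 / 4)
    · rw [hl, Set.image_pair] at hab
      push_cast at hab
      obtain ⟨hβ4, hα4⟩ := four_mul_eq_of_pair_eq hs hab
      exact .inr ⟨by linear_combination hα4 / 4, l, by linear_combination hβ4 / 4, hab⟩
  · rintro (⟨-, k, -, -, h⟩ | ⟨-, l, -, h⟩)
    · exact exists_intCast_of_pair_eq (a := -k ^ 2 + k) (b := -k ^ 2 - k) (by push_cast; exact h)
    · exact exists_intCast_of_pair_eq (a := -l ^ 2) (b := -(l + 1) ^ 2) (by push_cast; exact h)
end
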